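/- Let α ∈ (0,1) and β = (3(1-α)/(2α))^{(1-α)/(2α)}. If 0 < u < β, then ∫_u^∞ t·exp(-t^{2α/(1-α)}) dt ≤ (3/2)·β²·exp(-u^{2α/(1-α)}). -/

import Mathlib

open MeasureTheory Real

/-- Tail integral bound for u below the critical point β. -/
theorem tail_integral_small_u (α : ℝ) (hα : α ∈ Set.Ioo (0 : ℝ) 1) (u : ℝ)
    (hu : 0 < u) (hub : u < (3 * (1 - α) / (2 * α)) ^ ((1 - α) / (2 * α))) :
    ∫ t in Set.Ioi u, t * Real.exp (-(t ^ (2 * α / (1 - α)))) ≤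
      3 / 2 * ((3 * (1 - α) / (2 * α)) ^ ((1 - α) / (2 * α))) ^ 2 *
        Real.exp (-(u ^ (2 * α / (1 - α)))) := by
  obtain ⟨hα0, hα1⟩ := hα
  have h1α : (0:ℝ) < 1 - α := by linarith
  set p : ℝ := 2 * α / (1 - α) with hp_def
  have hp : 0 < p := by positivity
  set b : ℝ := (3 * (1 - α) / (2 * α)) ^ ((1 - α) / (2 * α)) with hb_def
  have hA : (0:ℝ) < 3 * (1 - α) / (2 * α) := by positivity
  have hb_pos : 0 < b := Real.rpow_pos_of_pos hA _
  have hub' : u ≤ b := hub.le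
  have he : (1 - α) / (2 * α) = p⁻¹ := by
    rw [hp_def]; field_simp
  have hA3p : 3 * (1 - α) / (2 * α) = 3 / p := by
    rw [hp_def]; field_simp
  have hbp : b ^ p = 3 / p := by
    rw [hb_def, he, ← Real.rpow_mul hA.le, inv_mul_cancel₀ hp.ne', Real.rpow_one, hA3p]
  -- key pointwise bound: t³ exp(-t^p) ≤ b³ exp(-b^p) for t ≥ b
  have key : ∀ t : ℝ, b ≤ t → t ^ 3 * Real.exp (-(t ^ p)) ≤ b ^ 3 * Real.exp (-(b ^ p)) := by
    intro t ht
    have ht0 : 0 < t := lt_of_lt_of_le hb_pos ht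
    have hq : 0 < t / b := div_pos ht0 hb_pos
    have hlog : Real.log ((t / b) ^ p) ≤ (t / b) ^ p - 1 :=
      Real.log_le_sub_one_of_pos (Real.rpow_pos_of_pos hq p)
    rw [Real.log_rpow hq, Real.div_rpow ht0.le hb_pos.le, hbp] at hlog
    have hL : Real.log (t / b) ≤ t ^ p / 3 - 1 / p := by
      rw [← mul_le_mul_iff_right₀ hp]
      have hrw : p * (t ^ p / 3 - 1 / p) = t ^ p / (3 / p) - 1 := by
        field_simp
      rw [hrw]; exact hlog
    have h2 : 3 * Real.log (t / b) ≤ t ^ p - b ^ p := by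
      rw [hbp]
      have h3 : (3:ℝ) / p = 3 * (1 / p) := by ring
      rw [h3]; linarith
    have e1 : t ^ 3 = b ^ 3 * Real.exp (3 * Real.log (t / b)) := by
      have e2 : Real.exp (3 * Real.log (t / b)) = (t / b) ^ (3:ℕ) := by
        rw [← Real.rpow_natCast (t / b) 3, Real.rpow_def_of_pos hq]
        norm_num [mul_comm]
      rw [e2, div_pow]
      field_simp
    rw [e1, mul_assoc, ← Real.exp_add]
    refine mul_le_mul_of_nonneg_left (Real.exp_le_exp.2 ?_) (by positivity)
    linarith
  set f : ℝ → ℝ := fun t => t * Real.exp (-(t ^ p)) with hf_def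
  have hfc : Continuous f :=
    continuous_id.mul (Real.continuous_exp.comp (Real.continuous_rpow_const hp.le).neg)
  set C : ℝ := b ^ 3 * Real.exp (-(b ^ p)) with hC_def
  have hC_pos : 0 < C := by positivity
  -- pointwise tail bound
  have hptw : ∀ t ∈ Set.Ioi b, f t ≤ C * t ^ (-2:ℝ) := by
    intro t ht
    have ht' : b ≤ t := le_of_lt ht
    have ht0 : 0 < t := lt_of_lt_of_le hb_pos ht'
    have ht2 : (0:ℝ) < t ^ 2 := by positivity
    have h2 : t ^ (-2:ℝ) = (t ^ 2)⁻¹ := by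
      rw [show ((-2:ℝ)) = -((2:ℕ):ℝ) by norm_num, Real.rpow_neg ht0.le, Real.rpow_natCast]
    rw [h2, ← div_eq_mul_inv, le_div_iff₀ ht2]
    calc f t * t ^ 2 = t ^ 3 * Real.exp (-(t ^ p)) := by rw [hf_def]; ring
      _ ≤ C := key t ht'
  -- integrability
  have hI2 : IntegrableOn (fun t : ℝ => C * t ^ (-2:ℝ)) (Set.Ioi b) :=
    (integrableOn_Ioi_rpow_of_lt (by norm_num) hb_pos).const_mul C
  have hIb : IntegrableOn f (Set.Ioi b) := by
    refine Integrable.mono hI2 hfc.aestronglyMeasurable ?_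
    refine (ae_restrict_iff' measurableSet_Ioi).2 (Filter.Eventually.of_forall fun t ht => ?_)
    have ht0 : 0 < t := lt_of_lt_of_le hb_pos (le_of_lt ht)
    rw [Real.norm_eq_abs, Real.norm_eq_abs,
      abs_of_nonneg (mul_nonneg ht0.le (Real.exp_pos _).le),
      abs_of_nonneg (mul_nonneg hC_pos.le (Real.rpow_nonneg ht0.le _))]
    exact hptw t ht
  have hIc : IntegrableOn f (Set.Ioc u b) := hfc.integrableOn_Ioc
  have hIg : IntegrableOn (fun t : ℝ => t * Real.exp (-(u ^ p))) (Set.Ioc u b) :=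
    (continuous_id.mul continuous_const).integrableOn_Ioc
  -- split the integral
  have hsplit : ∫ t in Set.Ioi u, f t
      = (∫ t in Set.Ioc u b, f t) + ∫ t in Set.Ioi b, f t := by
    rw [← setIntegral_union (Set.Ioc_disjoint_Ioi le_rfl) measurableSet_Ioi hIc hIb,
      Set.Ioc_union_Ioi_eq_Ioi hub']
  -- first piece
  have h1 : (∫ t in Set.Ioc u b, f t) ≤ b ^ 2 / 2 * Real.exp (-(u ^ p)) := by
    have hmono : (∫ t in Set.Ioc u b, f t)
        ≤ ∫ t in Set.Ioc u b, t * Real.exp (-(u ^ p)) := by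
      refine setIntegral_mono_on hIc hIg measurableSet_Ioc fun t ht => ?_
      have ht0 : 0 < t := lt_trans hu ht.1
      exact mul_le_mul_of_nonneg_left
        (Real.exp_le_exp.2 (neg_le_neg (Real.rpow_le_rpow hu.le ht.1.le hp.le))) ht0.le
    have hval : (∫ t in Set.Ioc u b, t * Real.exp (-(u ^ p)))
        = (b ^ 2 - u ^ 2) / 2 * Real.exp (-(u ^ p)) := by
      rw [← intervalIntegral.integral_of_le hub', intervalIntegral.integral_mul_const,
        integral_id]
    have hu2 : (0:ℝ) ≤ u ^ 2 := sq_nonneg u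
    have hE : (0:ℝ) < Real.exp (-(u ^ p)) := Real.exp_pos _
    rw [hval] at hmono
    nlinarith
  -- second piece
  have h2 : (∫ t in Set.Ioi b, f t) ≤ b ^ 2 * Real.exp (-(u ^ p)) := by
    have hmono : (∫ t in Set.Ioi b, f t) ≤ ∫ t in Set.Ioi b, C * t ^ (-2:ℝ) :=
      setIntegral_mono_on hIb hI2 measurableSet_Ioi hptw
    have hval : (∫ t in Set.Ioi b, C * t ^ (-2:ℝ)) = C * b⁻¹ := by
      rw [integral_const_mul, integral_Ioi_rpow_of_lt (by norm_num) hb_pos]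
      norm_num [Real.rpow_neg_one]
    have hCb : C * b⁻¹ = b ^ 2 * Real.exp (-(b ^ p)) := by
      rw [hC_def]; field_simp
    have hEb : Real.exp (-(b ^ p)) ≤ Real.exp (-(u ^ p)) :=
      Real.exp_le_exp.2 (neg_le_neg (Real.rpow_le_rpow hu.le hub' hp.le))
    calc (∫ t in Set.Ioi b, f t) ≤ C * b⁻¹ := hval ▸ hmono
      _ = b ^ 2 * Real.exp (-(b ^ p)) := hCb
      _ ≤ b ^ 2 * Real.exp (-(u ^ p)) := by
          exact mul_le_mul_of_nonneg_left hEb (by positivity)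
  show (∫ t in Set.Ioi u, f t) ≤ 3 / 2 * b ^ 2 * Real.exp (-(u ^ p))
  rw [hsplit]
  linarith
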